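/- arXiv:1111.4660 — 3 statements merged into one kernel-verified Lean document; each statement's English description precedes it below -/
import Mathlib

section
/- If sequences (a_n) and (b_n) both satisfy ∑|a_n|/√n < ∞, ∑|b_n|/√n < ∞, and their Dirichlet convolution equals δ (δ_1 = 1, δ_n = 0 for n > 1), then the bounded operators T(a_n) and T(b_n) on L²[0,∞) satisfy T(b_n)∘T(a_n) = Id. -/
open MeasureTheory Set LSeries
open scoped ENNReal LSeries.notation

noncomputable def ν : Measure ℝ := volume.restrict (Set.Ioi (0:ℝ))

/-- `T(a)f(x) = ∑_{n≥1} a_n f(n x)`. -/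
noncomputable def Tfun (a : ℕ → ℂ) (f : ℝ → ℂ) : ℝ → ℂ :=
  fun x => ∑' n : ℕ, a (n + 1) * f ((n + 1) * x)

/-! For `u ∈ L²(ν)` the double series `T(b)(T(a)u)(x) = ∑_{m,n ≥ 1} b_m a_n u(m n x)` converges
absolutely for a.e. `x`: dilating by `k` multiplies the `L²(ν)` norm by `k^{-1/2}`, so the `L²`
norms of its terms have sum at most `(∑ |b_m|/√m) (∑ |a_n|/√n) ‖u‖₂`. Grouping the terms by
`k = m n` turns it into `∑_k (b ⍟ a)_k u(k x) = u(x)`. -/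

section Dilation

variable {c : ℝ}

lemma map_const_mul_ν (hc : 0 < c) : ν.map (c * ·) = ENNReal.ofReal c⁻¹ • ν := by
  have hpre : (c * ·) ⁻¹' Ioi 0 = Ioi 0 := by
    ext x
    simp [mul_pos_iff_of_pos_left hc]
  rw [ν]
  nth_rw 1 [← hpre]
  rw [← Measure.restrict_map (measurable_const_mul c) measurableSet_Ioi,
    Real.map_volume_mul_left hc.ne', Measure.restrict_smul, abs_of_pos (inv_pos.2 hc)]

lemma quasiMeasurePreserving_const_mul_ν (hc : 0 < c) :
    Measure.QuasiMeasurePreserving (c * ·) ν ν :=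
  ⟨measurable_const_mul c, by rw [map_const_mul_ν hc]; exact Measure.smul_absolutelyContinuous⟩

lemma eLpNorm_comp_const_mul {E : Type*} [NormedAddCommGroup E] {f : ℝ → E}
    (hf : AEStronglyMeasurable f ν) (hc : 0 < c) {p : ℝ≥0∞} (hp : p ≠ ∞) :
    eLpNorm (fun x => f (c * x)) p ν = ENNReal.ofReal c⁻¹ ^ (1 / p).toReal * eLpNorm f p ν := by
  rw [← smul_eq_mul, ← eLpNorm_smul_measure_of_ne_top hp, ← map_const_mul_ν hc,
    eLpNorm_map_measure _ (measurable_const_mul c).aemeasurable]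
  · rfl
  · rw [map_const_mul_ν hc]
    exact hf.smul_measure _

lemma eLpNorm_two_comp_const_mul {E : Type*} [NormedAddCommGroup E] {f : ℝ → E}
    (hf : AEStronglyMeasurable f ν) (hc : 0 < c) :
    eLpNorm (fun x => f (c * x)) 2 ν = ENNReal.ofReal (Real.sqrt c)⁻¹ * eLpNorm f 2 ν := by
  rw [eLpNorm_comp_const_mul hf hc (by norm_num), show (1 / 2 : ℝ≥0∞).toReal = 1 / 2 by norm_num,
    ENNReal.ofReal_rpow_of_nonneg (by positivity) (by positivity), ← Real.sqrt_eq_rpow,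
    Real.sqrt_inv]

end Dilation

lemma ae_summable_norm_dilation_series {a b : ℕ → ℂ} {f : ℝ → ℂ}
    (ha : Summable fun n : ℕ => ‖a (n + 1)‖ / Real.sqrt (n + 1))
    (hb : Summable fun n : ℕ => ‖b (n + 1)‖ / Real.sqrt (n + 1)) (hf : MemLp f 2 ν) :
    ∀ᵐ x ∂ν, Summable fun p : ℕ × ℕ =>
      ‖b (p.1 + 1) * a (p.2 + 1) * f (((p.1 + 1) * (p.2 + 1) : ℕ) * x)‖ := by
  have hpos : ∀ p : ℕ × ℕ, (0 : ℝ) < ((p.1 + 1) * (p.2 + 1) : ℕ) := fun p => by positivity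
  have hterm : ∀ p : ℕ × ℕ,
      eLpNorm (fun x => b (p.1 + 1) * a (p.2 + 1) * f (((p.1 + 1) * (p.2 + 1) : ℕ) * x)) 2 ν
        = ENNReal.ofReal (‖b (p.1 + 1)‖ / Real.sqrt (p.1 + 1) *
            (‖a (p.2 + 1)‖ / Real.sqrt (p.2 + 1))) * eLpNorm f 2 ν := by
    intro p
    rw [show (fun x => b (p.1 + 1) * a (p.2 + 1) * f (((p.1 + 1) * (p.2 + 1) : ℕ) * x))
        = (b (p.1 + 1) * a (p.2 + 1)) • fun x => f (((p.1 + 1) * (p.2 + 1) : ℕ) * x) from rfl,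
      eLpNorm_const_smul, eLpNorm_two_comp_const_mul hf.1 (hpos p), ← mul_assoc, ← ofReal_norm,
      ← ENNReal.ofReal_mul (norm_nonneg _), norm_mul, Nat.cast_mul, Real.sqrt_mul (by positivity)]
    push_cast
    congr 2
    ring
  apply summable_norm_of_tsum_eLpNorm_ne_top one_le_two fun p =>
    ((hf.1.comp_quasiMeasurePreserving (quasiMeasurePreserving_const_mul_ν (hpos p))).const_mul _)
  simp_rw [Function.comp_apply, hterm]
  rw [ENNReal.tsum_mul_right, ← ENNReal.ofReal_tsum_of_nonneg (fun p => by positivity)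
    (hb.mul_of_nonneg ha (fun n => by positivity) (fun n => by positivity))]
  exact ENNReal.mul_ne_top ENNReal.ofReal_ne_top hf.2.ne

lemma LSeries.convolution_apply_eq_sum_divisors (a b : ℕ → ℂ) (n : ℕ) :
    (b ⍟ a) n = ∑ d ∈ n.divisors, a d * b (n / d) := by
  rw [convolution_def]
  exact (Nat.sum_divisorsAntidiagonal' fun i j => b i * a j).trans
    (Finset.sum_congr rfl fun _ _ => mul_comm _ _)

lemma tsum_succ_mul_succ_eq_tsum_convolution (u v g : ℕ → ℂ)
    (h : Summable fun p : ℕ × ℕ => u (p.1 + 1) * v (p.2 + 1) * g ((p.1 + 1) * (p.2 + 1))) :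
    ∑' p : ℕ × ℕ, u (p.1 + 1) * v (p.2 + 1) * g ((p.1 + 1) * (p.2 + 1))
      = ∑' n, (u ⍟ v) n * g n := by
  -- `term u 0` is `u` with `0` at index `0`: this extends the sum by zeros to all of `ℕ × ℕ`,
  -- where its fibres over `p.1 * p.2` are the terms of `u ⍟ v` (`term_convolution'`).
  set H : ℕ × ℕ → ℂ := fun p => term u 0 p.1 * term v 0 p.2 * g (p.1 * p.2)
  have hshift : Function.Injective (Prod.map Nat.succ Nat.succ) :=
    Nat.succ_injective.prodMap Nat.succ_injective
  have hH : H ∘ Prod.map Nat.succ Nat.succ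
      = fun p : ℕ × ℕ => u (p.1 + 1) * v (p.2 + 1) * g ((p.1 + 1) * (p.2 + 1)) := by
    ext p
    simp [H]
  have hvanish : ∀ p ∉ range (Prod.map Nat.succ Nat.succ), H p = 0 := by
    rintro ⟨_ | m, _ | n⟩ hp
    · simp [H]
    · simp [H]
    · simp [H]
    · exact absurd ⟨(m, n), rfl⟩ hp
  have hfiber : ∀ n, ∑' q : (fun p : ℕ × ℕ => p.1 * p.2) ⁻¹' {n}, H q = (u ⍟ v) n * g n := by
    intro n
    have hq : ∀ q : (fun p : ℕ × ℕ => p.1 * p.2) ⁻¹' {n},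
        H q = term u 0 q.1.1 * term v 0 q.1.2 * g n := fun q => by
      simp only [H, show q.1.1 * q.1.2 = n from q.2]
    rw [tsum_congr hq, tsum_mul_right, ← congrFun (term_convolution' u v 0) n,
      term_def₀ (convolution_map_zero u v)]
    simp
  have hsum : Summable H := (hshift.summable_iff hvanish).1 (hH ▸ h)
  rw [← hH]
  calc ∑' p, (H ∘ Prod.map Nat.succ Nat.succ) p
      = ∑' p, H p := hshift.tsum_eq (Function.support_subset_iff'.2 hvanish)
    _ = ∑' n, ∑' q : (fun p : ℕ × ℕ => p.1 * p.2) ⁻¹' {n}, H q :=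
        (hsum.hasSum.tsum_fiberwise _).tsum_eq.symm
    _ = ∑' n, (u ⍟ v) n * g n := tsum_congr hfiber

lemma Tfun_Tfun_apply {a b : ℕ → ℂ} {f : ℝ → ℂ} {x : ℝ}
    (h : Summable fun p : ℕ × ℕ =>
      ‖b (p.1 + 1) * a (p.2 + 1) * f (((p.1 + 1) * (p.2 + 1) : ℕ) * x)‖) :
    Tfun b (Tfun a f) x = ∑' n, (b ⍟ a) n * f (n * x) := by
  have hs := h.of_norm
  calc Tfun b (Tfun a f) x
      = ∑' m, ∑' n, b (m + 1) * a (n + 1) * f (((m + 1) * (n + 1) : ℕ) * x) := by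
        simp only [Tfun, ← tsum_mul_left, mul_assoc]
        congr! 5 with m n
        congr 2
        push_cast
        ring
    _ = ∑' p : ℕ × ℕ, b (p.1 + 1) * a (p.2 + 1) * f (((p.1 + 1) * (p.2 + 1) : ℕ) * x) :=
        (hs.tsum_prod' hs.prod_factor).symm
    _ = ∑' n, (b ⍟ a) n * f (n * x) :=
        tsum_succ_mul_succ_eq_tsum_convolution b a (fun k => f (k * x)) hs

theorem stmt5 (a b : ℕ → ℂ)
    (ha : Summable fun n : ℕ => ‖a (n + 1)‖ / Real.sqrt (n + 1))
    (hb : Summable fun n : ℕ => ‖b (n + 1)‖ / Real.sqrt (n + 1))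
    (hconv : ∀ n : ℕ, 1 ≤ n →
      (∑ d ∈ n.divisors, a d * b (n / d)) = if n = 1 then 1 else 0)
    (Ta Tb : Lp ℂ 2 ν →L[ℂ] Lp ℂ 2 ν)
    (hTa : ∀ (f : ℝ → ℂ) (hf : MemLp f 2 ν),
      ∃ h2 : MemLp (Tfun a f) 2 ν, Ta (hf.toLp f) = h2.toLp (Tfun a f))
    (hTb : ∀ (f : ℝ → ℂ) (hf : MemLp f 2 ν),
      ∃ h2 : MemLp (Tfun b f) 2 ν, Tb (hf.toLp f) = h2.toLp (Tfun b f)) :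
    ∀ u : Lp ℂ 2 ν, Tb (Ta u) = u := by
  intro u
  have hu := Lp.memLp u
  obtain ⟨hTau, hTa_u⟩ := hTa u hu
  obtain ⟨hTbTau, hTb_Tau⟩ := hTb _ hTau
  have hδ : b ⍟ a = fun n => if n = 1 then 1 else 0 := by
    ext n
    rcases n.eq_zero_or_pos with rfl | hn
    · simp
    · rw [convolution_apply_eq_sum_divisors, hconv n hn]
  have hinv : Tfun b (Tfun a u) =ᵐ[ν] u := by
    filter_upwards [ae_summable_norm_dilation_series ha hb hu] with x hx
    simp [Tfun_Tfun_apply hx, hδ]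
  calc Tb (Ta u) = Tb (Ta (hu.toLp u)) := by rw [Lp.toLp_coeFn u hu]
    _ = hTbTau.toLp (Tfun b (Tfun a u)) := by rw [hTa_u, hTb_Tau]
    _ = u := by rw [(MemLp.toLp_eq_toLp_iff hTbTau hu).2 hinv, Lp.toLp_coeFn u hu]
end

section
/- Let (a_n) satisfy ∑|a_n|/√n < ∞ and the C-isometry condition. Then ST(conj(a_n))S = T(a_n)* on L²(0,∞), where Sf(x) = (1/x)f(1/x). -/
open MeasureTheory Set ComplexConjugate

/-- `Sf(x) = (1/x) f(1/x)`. -/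
noncomputable def Sfun (f : ℝ → ℂ) : ℝ → ℂ := fun x => (x : ℂ)⁻¹ * f x⁻¹

/-! Pair both sides with `v ∈ L²`. As `S` is a unitary involution,
`⟪S Tc S u, v⟫ = ⟪Tc (S u), S v⟫`, an integral over `(0, ∞)`. Expanding `Tc` into its series, the
substitution `x ↦ 1 / ((n + 1) x)` turns the `n`-th term `∫ conj (f ((n + 1) x)) · Sg(x)` into
`∫ conj (Sf(x)) · g ((n + 1) x)`, and summing back gives `⟪u, T v⟫`. Series and integral may be
interchanged because dilation by `c` scales `L²` norms by `c^{-1/2}`, so by Cauchy–Schwarz the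
`n`-th term is at most `|a (n + 1)| / √(n + 1) · ‖f‖₂ ‖g‖₂`, which is summable. -/

open scoped ENNReal

theorem map_mul_left_ν {c : ℝ} (hc : 0 < c) : ν.map (c * ·) = ENNReal.ofReal c⁻¹ • ν := by
  have hpre : (c * ·) ⁻¹' Ioi (0 : ℝ) = Ioi 0 := by
    ext x; simp [mul_pos_iff_of_pos_left hc]
  rw [ν, ← hpre, ← Measure.restrict_map (measurable_const_mul c) measurableSet_Ioi,
    Real.map_volume_mul_left hc.ne', Measure.restrict_smul, abs_of_pos (inv_pos.mpr hc), hpre]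

theorem quasiMeasurePreserving_mul_left_ν {c : ℝ} (hc : 0 < c) :
    Measure.QuasiMeasurePreserving (c * ·) ν ν :=
  ⟨measurable_const_mul c, by rw [map_mul_left_ν hc]; exact Measure.smul_absolutelyContinuous⟩

theorem eLpNorm_comp_mul_left_ν {E : Type*} [NormedAddCommGroup E] {c : ℝ} (hc : 0 < c)
    {f : ℝ → E} (hf : AEStronglyMeasurable f ν) (p : ℝ≥0∞) :
    eLpNorm (fun x => f (c * x)) p ν = ENNReal.ofReal c⁻¹ ^ (1 / p).toReal * eLpNorm f p ν := by
  have hmap : AEStronglyMeasurable f (ν.map (c * ·)) := by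
    rw [map_mul_left_ν hc]; exact hf.smul_measure _
  rw [show (fun x => f (c * x)) = f ∘ (c * ·) from rfl,
    ← eLpNorm_map_measure hmap (measurable_const_mul c).aemeasurable, map_mul_left_ν hc,
    eLpNorm_smul_measure_of_ne_zero (by simpa using hc)]
  rfl

theorem ENNReal.ofReal_inv_rpow_half {c : ℝ} (hc : 0 ≤ c) :
    ENNReal.ofReal c⁻¹ ^ (1 / (2 : ℝ≥0∞)).toReal = ENNReal.ofReal (Real.sqrt c)⁻¹ := by
  rw [ENNReal.ofReal_rpow_of_nonneg (inv_nonneg.mpr hc) (by positivity), Real.sqrt_eq_rpow,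
    Real.inv_rpow hc]
  norm_num

theorem lintegral_enorm_comp_mul_left_mul_le {𝕜 : Type*} [NormedField 𝕜] {c : ℝ} (hc : 0 < c)
    {f g : ℝ → 𝕜} (hf : AEStronglyMeasurable f ν) (hg : AEStronglyMeasurable g ν) :
    ∫⁻ x, ‖f (c * x) * g x‖ₑ ∂ν ≤
      ENNReal.ofReal (Real.sqrt c)⁻¹ * (eLpNorm f 2 ν * eLpNorm g 2 ν) := by
  rw [← eLpNorm_one_eq_lintegral_enorm, ← ENNReal.ofReal_inv_rpow_half hc.le, ← mul_assoc,
    ← eLpNorm_comp_mul_left_ν hc hf]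
  exact (eLpNorm_smul_le_mul_eLpNorm (p := 2) (q := 2) (r := 1) hg
    (hf.comp_quasiMeasurePreserving (quasiMeasurePreserving_mul_left_ν hc)) :)

theorem tsum_enorm_mul_ofReal_inv_sqrt_ne_top {a : ℕ → ℂ}
    (ha : Summable fun n : ℕ => ‖a (n + 1)‖ / Real.sqrt (n + 1)) :
    ∑' n : ℕ, ‖a (n + 1)‖ₑ * ENNReal.ofReal (Real.sqrt (n + 1))⁻¹ ≠ ∞ := by
  simp_rw [← ofReal_norm, ← ENNReal.ofReal_mul (norm_nonneg _), ← div_eq_mul_inv]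
  rw [← ENNReal.ofReal_tsum_of_nonneg (fun n => by positivity) ha]
  exact ENNReal.ofReal_ne_top

theorem integral_Tfun_mul {a : ℕ → ℂ}
    (ha : Summable fun n : ℕ => ‖a (n + 1)‖ / Real.sqrt (n + 1))
    {f g : ℝ → ℂ} (hf : MemLp f 2 ν) (hg : MemLp g 2 ν) :
    ∫ x, Tfun a f x * g x ∂ν = ∑' n : ℕ, a (n + 1) * ∫ x, f ((n + 1) * x) * g x ∂ν := by
  have hpos (n : ℕ) : (0 : ℝ) < n + 1 := n.cast_add_one_pos
  have hmeas (n : ℕ) : AEStronglyMeasurable (fun x => a (n + 1) * (f ((n + 1) * x) * g x)) ν :=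
    ((hf.1.comp_quasiMeasurePreserving (quasiMeasurePreserving_mul_left_ν (hpos n))).mul
      hg.1).const_mul _
  have hbound : ∑' n : ℕ, ∫⁻ x, ‖a (n + 1) * (f ((n + 1) * x) * g x)‖ₑ ∂ν ≠ ∞ := by
    refine ne_top_of_le_ne_top (b := (∑' n : ℕ, ‖a (n + 1)‖ₑ *
      ENNReal.ofReal (Real.sqrt (n + 1))⁻¹) * (eLpNorm f 2 ν * eLpNorm g 2 ν)) ?_ ?_
    · exact ENNReal.mul_ne_top (tsum_enorm_mul_ofReal_inv_sqrt_ne_top ha)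
        (ENNReal.mul_ne_top hf.eLpNorm_ne_top hg.eLpNorm_ne_top)
    rw [← ENNReal.tsum_mul_right]
    refine ENNReal.tsum_le_tsum fun n => ?_
    simp_rw [enorm_mul (a := a (n + 1))]
    rw [lintegral_const_mul' _ _ enorm_ne_top, mul_assoc]
    exact mul_le_mul_right (lintegral_enorm_comp_mul_left_mul_le (hpos n) hf.1 hg.1) _
  calc ∫ x, Tfun a f x * g x ∂ν
      = ∫ x, ∑' n : ℕ, a (n + 1) * (f ((n + 1) * x) * g x) ∂ν := by
        simp_rw [Tfun, ← tsum_mul_right, mul_assoc]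
    _ = ∑' n : ℕ, a (n + 1) * ∫ x, f ((n + 1) * x) * g x ∂ν := by
        simp_rw [integral_tsum hmeas hbound, integral_const_mul]

theorem image_inv_mul_left_Ioi {c : ℝ} (hc : 0 < c) : (fun y => (c * y)⁻¹) '' Ioi 0 = Ioi 0 := by
  ext z
  refine ⟨fun ⟨y, hy, hyz⟩ => hyz ▸ inv_pos.mpr (mul_pos hc hy), fun hz => ?_⟩
  refine ⟨(c * z)⁻¹, inv_pos.mpr (mul_pos hc hz), ?_⟩
  field_simp

theorem integral_comp_mul_left_mul_Sfun {c : ℝ} (hc : 0 < c) (f g : ℝ → ℂ) :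
    ∫ x, f (c * x) * Sfun g x ∂ν = ∫ x, g (c * x) * Sfun f x ∂ν := by
  have hderiv : ∀ y ∈ Ioi (0 : ℝ),
      HasDerivWithinAt (fun y => (c * y)⁻¹) (-c / (c * y) ^ 2) (Ioi 0) y := fun y hy => by
    have hlin : HasDerivAt (fun y : ℝ => c * y) c y := by simpa using (hasDerivAt_id y).const_mul c
    exact (hlin.inv (mul_pos hc hy).ne').hasDerivWithinAt
  have hinj : InjOn (fun y : ℝ => (c * y)⁻¹) (Ioi 0) :=
    (inv_injective.comp (mul_right_injective₀ hc.ne')).injOn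
  have hsubst := integral_image_eq_integral_abs_deriv_smul measurableSet_Ioi hderiv hinj
    (fun x => f (c * x) * Sfun g x)
  rw [image_inv_mul_left_Ioi hc] at hsubst
  rw [ν, hsubst]
  refine setIntegral_congr_fun measurableSet_Ioi fun y (hy : 0 < y) => ?_
  have hcy : 0 < c * y := mul_pos hc hy
  simp only [Sfun, abs_div, abs_neg, abs_of_pos hc, abs_of_pos (pow_pos hcy 2), inv_inv,
    Complex.real_smul]
  push_cast
  have hyC : (y : ℂ) ≠ 0 := by exact_mod_cast hy.ne'
  have hcC : (c : ℂ) ≠ 0 := by exact_mod_cast hc.ne'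
  field_simp

theorem conj_Tfun_conj (a : ℕ → ℂ) (f : ℝ → ℂ) (x : ℝ) :
    conj (Tfun (fun n => conj (a n)) f x) = Tfun a (fun y => conj (f y)) x := by
  simp only [Tfun, Complex.conj_tsum, map_mul, Complex.conj_conj]

theorem Sfun_conj (f : ℝ → ℂ) : Sfun (fun y => conj (f y)) = fun x => conj (Sfun f x) := by
  ext x
  simp only [Sfun, map_mul, map_inv₀, Complex.conj_ofReal]

theorem integral_conj_Tfun_conj_mul_Sfun {a : ℕ → ℂ}
    (ha : Summable fun n : ℕ => ‖a (n + 1)‖ / Real.sqrt (n + 1))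
    {f g : ℝ → ℂ} (hf : MemLp f 2 ν) (hg : MemLp g 2 ν)
    (hSf : MemLp (Sfun f) 2 ν) (hSg : MemLp (Sfun g) 2 ν) :
    ∫ x, conj (Tfun (fun n => conj (a n)) f x) * Sfun g x ∂ν =
      ∫ x, conj (Sfun f x) * Tfun a g x ∂ν := by
  calc ∫ x, conj (Tfun (fun n => conj (a n)) f x) * Sfun g x ∂ν
      = ∫ x, Tfun a (fun y => conj (f y)) x * Sfun g x ∂ν := by simp_rw [conj_Tfun_conj]
    _ = ∑' n : ℕ, a (n + 1) * ∫ x, conj (f ((n + 1) * x)) * Sfun g x ∂ν :=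
        integral_Tfun_mul ha hf.star hSg
    _ = ∑' n : ℕ, a (n + 1) * ∫ x, g ((n + 1) * x) * conj (Sfun f x) ∂ν := by
        congr! 2 with n
        rw [integral_comp_mul_left_mul_Sfun n.cast_add_one_pos (fun y => conj (f y)) g, Sfun_conj]
    _ = ∫ x, Tfun a g x * conj (Sfun f x) ∂ν :=
        (integral_Tfun_mul ha hg hSf.star).symm
    _ = ∫ x, conj (Sfun f x) * Tfun a g x ∂ν := by simp_rw [mul_comm]

theorem Sfun_Sfun_ae_eq (f : ℝ → ℂ) : Sfun (Sfun f) =ᵐ[ν] f := by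
  filter_upwards [ae_restrict_mem measurableSet_Ioi] with x (hx : 0 < x)
  have hxC : (x : ℂ) ≠ 0 := by exact_mod_cast hx.ne'
  simp only [Sfun, inv_inv, Complex.ofReal_inv, inv_mul_cancel_left₀ hxC]

theorem MeasureTheory.Lp.exists_apply_eq_toLp {α E : Type*} [MeasurableSpace α]
    [NormedAddCommGroup E]
    {μ : Measure α} {p : ℝ≥0∞} {A : Lp E p μ → Lp E p μ} {Φ : (α → E) → α → E}
    (hA : ∀ (f : α → E) (hf : MemLp f p μ), ∃ h : MemLp (Φ f) p μ, A (hf.toLp f) = h.toLp (Φ f))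
    (u : Lp E p μ) : ∃ h : MemLp (Φ u) p μ, A u = h.toLp (Φ u) := by
  simpa only [Lp.toLp_coeFn] using hA u (Lp.memLp u)

theorem involutive_of_toLp_Sfun {S : Lp ℂ 2 ν → Lp ℂ 2 ν}
    (hS : ∀ (f : ℝ → ℂ) (hf : MemLp f 2 ν),
      ∃ h : MemLp (Sfun f) 2 ν, S (hf.toLp f) = h.toLp (Sfun f)) :
    Function.Involutive S := by
  intro u
  obtain ⟨hSu, eSu⟩ := Lp.exists_apply_eq_toLp hS u
  obtain ⟨hSSu, eSSu⟩ := hS _ hSu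
  rw [eSu, eSSu]
  exact Lp.ext (hSSu.coeFn_toLp.trans (Sfun_Sfun_ae_eq u))

theorem MeasureTheory.L2.inner_eq_integral_of_ae_eq {u v : Lp ℂ 2 ν} {f g : ℝ → ℂ}
    (hu : u =ᵐ[ν] f) (hv : v =ᵐ[ν] g) : inner ℂ u v = ∫ x, conj (f x) * g x ∂ν := by
  rw [L2.inner_def]
  refine integral_congr_ae ?_
  filter_upwards [hu, hv] with x hux hvx
  rw [hux, hvx, RCLike.inner_apply']

theorem stmt10_general (a : ℕ → ℂ)
    (ha : Summable fun n : ℕ => ‖a (n + 1)‖ / Real.sqrt (n + 1))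
    (S : Lp ℂ 2 ν ≃ₗᵢ[ℂ] Lp ℂ 2 ν)
    (hS : ∀ (f : ℝ → ℂ) (hf : MemLp f 2 ν),
      ∃ h2 : MemLp (Sfun f) 2 ν, S (hf.toLp f) = h2.toLp (Sfun f))
    (T Tc : Lp ℂ 2 ν →L[ℂ] Lp ℂ 2 ν)
    (hT : ∀ (f : ℝ → ℂ) (hf : MemLp f 2 ν),
      ∃ h2 : MemLp (Tfun a f) 2 ν, T (hf.toLp f) = h2.toLp (Tfun a f))
    (hTc : ∀ (f : ℝ → ℂ) (hf : MemLp f 2 ν),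
      ∃ h2 : MemLp (Tfun (fun n => conj (a n)) f) 2 ν,
        Tc (hf.toLp f) = h2.toLp (Tfun (fun n => conj (a n)) f)) :
    ∀ u : Lp ℂ 2 ν, S (Tc (S u)) = ContinuousLinearMap.adjoint T u := by
  intro u
  refine ext_inner_right ℂ fun v => ?_
  obtain ⟨hSu, eSu⟩ := Lp.exists_apply_eq_toLp hS u
  obtain ⟨hSv, eSv⟩ := Lp.exists_apply_eq_toLp hS v
  obtain ⟨_, eTv⟩ := Lp.exists_apply_eq_toLp hT v
  obtain ⟨_, eTcSu⟩ := hTc _ hSu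
  obtain ⟨hSSu, -⟩ := hS _ hSu
  calc inner ℂ (S (Tc (S u))) v = inner ℂ (Tc (S u)) (S v) := by
        rw [← S.inner_map_map (Tc (S u)) (S v), involutive_of_toLp_Sfun hS v]
    _ = ∫ x, conj (Tfun (fun n => conj (a n)) (Sfun u) x) * Sfun v x ∂ν := by
        rw [eSu, eTcSu, eSv]
        exact L2.inner_eq_integral_of_ae_eq (MemLp.coeFn_toLp _) (MemLp.coeFn_toLp _)
    _ = ∫ x, conj (Sfun (Sfun u) x) * Tfun a v x ∂ν :=
        integral_conj_Tfun_conj_mul_Sfun ha hSu (Lp.memLp v) hSSu hSv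
    _ = inner ℂ u (T v) := by
        rw [eTv]
        exact (L2.inner_eq_integral_of_ae_eq (Sfun_Sfun_ae_eq u).symm (MemLp.coeFn_toLp _)).symm
    _ = inner ℂ (ContinuousLinearMap.adjoint T u) v := (T.adjoint_inner_left v u).symm

theorem stmt10 (a : ℕ → ℂ)
    (ha : Summable fun n : ℕ => ‖a (n + 1)‖ / Real.sqrt (n + 1))
    (C : ℝ) (hC : 0 < C)
    (hiso : ∀ m₀ n₀ : ℕ, 0 < m₀ → 0 < n₀ → Nat.Coprime m₀ n₀ →
      (∑' k : ℕ, a (m₀ * (k + 1)) * conj (a (n₀ * (k + 1))) / ((k : ℂ) + 1)) =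
        if m₀ = 1 ∧ n₀ = 1 then (C : ℂ) ^ 2 else 0)
    (S : Lp ℂ 2 ν ≃ₗᵢ[ℂ] Lp ℂ 2 ν)
    (hS : ∀ (f : ℝ → ℂ) (hf : MemLp f 2 ν),
      ∃ h2 : MemLp (Sfun f) 2 ν, S (hf.toLp f) = h2.toLp (Sfun f))
    (T Tc : Lp ℂ 2 ν →L[ℂ] Lp ℂ 2 ν)
    (hT : ∀ (f : ℝ → ℂ) (hf : MemLp f 2 ν),
      ∃ h2 : MemLp (Tfun a f) 2 ν, T (hf.toLp f) = h2.toLp (Tfun a f))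
    (hTc : ∀ (f : ℝ → ℂ) (hf : MemLp f 2 ν),
      ∃ h2 : MemLp (Tfun (fun n => conj (a n)) f) 2 ν,
        Tc (hf.toLp f) = h2.toLp (Tfun (fun n => conj (a n)) f)) :
    ∀ u : Lp ℂ 2 ν, S (Tc (S u)) = ContinuousLinearMap.adjoint T u :=
  stmt10_general a ha S hS T Tc hT hTc
end

section
/- Let g ∈ L²(ℝ) be C^∞ with sup_{|y|<b} sup_t e^{yt}|g^{(k)}(t)| < ∞ for all b < B and all k ≥ 0. Then ĝ extends to an analytic function h on the strip |Im z| < B such that sup_{|y|<b} sup_x |x|^k |h(x+iy)| < ∞ for all b < B and k ≥ 0. -/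
open MeasureTheory Complex Filter Set

lemma aux_int_exp {c : ℝ} (hc : 0 < c) :
    Integrable fun t : ℝ => Real.exp (-(c * |t|)) := by
  have h1 : IntegrableOn (fun t : ℝ => Real.exp (-(c * |t|))) (Set.Ioi 0) := by
    refine ((exp_neg_integrableOn_Ioi 0 hc).congr_fun ?_ measurableSet_Ioi)
    intro t ht
    simp only [abs_of_pos (show (0:ℝ) < t from ht), neg_mul]
  have h2 : IntegrableOn (fun t : ℝ => Real.exp (-(c * |t|))) (Set.Iic 0) := by
    rw [← Measure.map_neg_eq_self (volume : Measure ℝ)]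
    have m : MeasurableEmbedding fun x : ℝ => -x := (Homeomorph.neg ℝ).measurableEmbedding
    rw [m.integrableOn_map_iff]
    simp only [Function.comp_def, abs_neg, neg_preimage, neg_Iic, neg_zero]
    exact Iff.mpr integrableOn_Ici_iff_integrableOn_Ioi h1
  have h3 := h2.union h1
  rw [Set.Iic_union_Ioi] at h3
  exact integrableOn_univ.mp h3

lemma aux_abs (t : ℝ) (z : ℂ) :
    ‖Complex.exp (-(Complex.I * t * z))‖ = Real.exp (t * z.im) := by
  rw [Complex.norm_exp]
  congr 1
  simp [Complex.mul_re, Complex.mul_im]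

lemma aux_t_le {c : ℝ} (hc : 0 < c) (t : ℝ) :
    |t| * Real.exp (-(c * |t|)) ≤ (2 / c) * Real.exp (-(c / 2 * |t|)) := by
  have h1 : c / 2 * |t| ≤ Real.exp (c / 2 * |t|) := by
    have := Real.add_one_le_exp (c / 2 * |t|); linarith
  have h2 : |t| ≤ (2 / c) * Real.exp (c / 2 * |t|) := by
    have h3 : (2 / c) * (c / 2 * |t|) ≤ (2 / c) * Real.exp (c / 2 * |t|) :=
      mul_le_mul_of_nonneg_left h1 (by positivity)
    calc |t| = (2 / c) * (c / 2 * |t|) := by field_simp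
      _ ≤ _ := h3
  calc |t| * Real.exp (-(c * |t|))
      ≤ ((2 / c) * Real.exp (c / 2 * |t|)) * Real.exp (-(c * |t|)) :=
        mul_le_mul_of_nonneg_right h2 (Real.exp_nonneg _)
    _ = (2 / c) * Real.exp (-(c / 2 * |t|)) := by
        rw [mul_assoc, ← Real.exp_add]
        congr 2
        ring

noncomputable def Faux (g : ℝ → ℂ) (z : ℂ) (t : ℝ) : ℂ :=
  g t * Complex.exp (-(Complex.I * t * z))

lemma faux_norm (g : ℝ → ℂ) (z : ℂ) (t : ℝ) :
    ‖Faux g z t‖ = ‖g t‖ * Real.exp (t * z.im) := by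
  rw [Faux, norm_mul, aux_abs]

lemma faux_pointwise {g : ℝ → ℂ} {z : ℂ} {b₀ b M : ℝ} (t : ℝ) (hz : |z.im| ≤ b₀)
    (hM : ∀ t, ‖g t‖ ≤ M * Real.exp (-(b * |t|))) :
    ‖Faux g z t‖ ≤ M * Real.exp (-((b - b₀) * |t|)) := by
  have hM0 : 0 ≤ M * Real.exp (-(b * |t|)) := le_trans (norm_nonneg _) (hM t)
  rw [faux_norm]
  calc ‖g t‖ * Real.exp (t * z.im)
      ≤ (M * Real.exp (-(b * |t|))) * Real.exp (b₀ * |t|) := by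
        refine mul_le_mul (hM t) (Real.exp_le_exp.mpr ?_) (Real.exp_nonneg _) hM0
        calc t * z.im ≤ |t * z.im| := le_abs_self _
          _ = |z.im| * |t| := by rw [abs_mul, mul_comm]
          _ ≤ b₀ * |t| := mul_le_mul_of_nonneg_right hz (abs_nonneg _)
    _ = M * Real.exp (-((b - b₀) * |t|)) := by
        rw [mul_assoc, ← Real.exp_add]
        congr 2
        ring

lemma faux_meas {g : ℝ → ℂ} (hgc : Continuous g) (z : ℂ) :
    Continuous (Faux g z) := by
  apply hgc.mul
  exact Complex.continuous_exp.comp (by continuity)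

lemma faux_integrable {g : ℝ → ℂ} (hgc : Continuous g) {z : ℂ} {b₀ b M : ℝ}
    (hz : |z.im| ≤ b₀) (hb : b₀ < b)
    (hM : ∀ t, ‖g t‖ ≤ M * Real.exp (-(b * |t|))) :
    Integrable (Faux g z) := by
  have hc : (0:ℝ) < b - b₀ := by linarith
  exact Integrable.mono' ((aux_int_exp hc).const_mul M)
    (faux_meas hgc z).aestronglyMeasurable
    (ae_of_all _ fun t => faux_pointwise t hz hM)

lemma faux_integral_bound {g : ℝ → ℂ} {z : ℂ} {b₀ b M : ℝ}
    (hz : |z.im| ≤ b₀) (hb : b₀ < b)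
    (hM : ∀ t, ‖g t‖ ≤ M * Real.exp (-(b * |t|))) :
    ‖∫ t, Faux g z t‖ ≤ M * ∫ t : ℝ, Real.exp (-((b - b₀) * |t|)) := by
  have hc : (0:ℝ) < b - b₀ := by linarith
  rw [← integral_const_mul]
  exact norm_integral_le_of_norm_le ((aux_int_exp hc).const_mul M)
    (ae_of_all _ fun t => faux_pointwise t hz hM)

lemma tendsto_of_exp_bound {F : ℝ → ℂ} {M c : ℝ} (hc : 0 < c)
    (h : ∀ t, ‖F t‖ ≤ M * Real.exp (-(c * |t|))) :
    Filter.Tendsto F Filter.atTop (nhds 0) ∧ Filter.Tendsto F Filter.atBot (nhds 0) := by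
  have key : ∀ l : Filter ℝ, Filter.Tendsto (fun t : ℝ => |t|) l Filter.atTop →
      Filter.Tendsto F l (nhds 0) := by
    intro l hl
    have h1 : Filter.Tendsto (fun t : ℝ => -(c * |t|)) l Filter.atBot :=
      Filter.tendsto_neg_atTop_atBot.comp (hl.const_mul_atTop hc)
    have h2 : Filter.Tendsto (fun t : ℝ => M * Real.exp (-(c * |t|))) l (nhds 0) := by
      have := (Real.tendsto_exp_atBot.comp h1).const_mul M
      simpa using this
    exact squeeze_zero_norm h h2
  exact ⟨key _ tendsto_abs_atTop_atTop, key _ tendsto_abs_atBot_atTop⟩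

lemma integral_deriv_eq_zero' (f f' : ℝ → ℂ) (hd : ∀ t, HasDerivAt f (f' t) t)
    (hi : Integrable f') (ht : Filter.Tendsto f Filter.atTop (nhds 0))
    (hb : Filter.Tendsto f Filter.atBot (nhds 0)) :
    ∫ t, f' t = 0 := by
  have h1 := integral_Ioi_of_hasDerivAt_of_tendsto' (a := 0) (fun x _ => hd x)
    hi.integrableOn ht
  have h2 := integral_Iic_of_hasDerivAt_of_tendsto' (a := 0) (fun x _ => hd x)
    hi.integrableOn hb
  rw [← intervalIntegral.integral_Iic_add_Ioi hi.integrableOn hi.integrableOn, h1, h2]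
  ring

lemma faux_hasDerivAt_t {g : ℝ → ℂ} {d : ℂ} (z : ℂ) (t : ℝ) (hg : HasDerivAt g d t) :
    HasDerivAt (fun s => Faux g z s) (d * Complex.exp (-(Complex.I * t * z))
      + (-(Complex.I * z)) * Faux g z t) t := by
  have h2 : HasDerivAt (fun s : ℝ => -(Complex.I * (s : ℂ) * z)) (-(Complex.I * z)) t := by
    have h0 : HasDerivAt (fun s : ℝ => (s : ℂ)) 1 t := by
      have := (hasDerivAt_id t).ofReal_comp
      simp only [ofReal_one] at this
      exact this
    have := ((h0.const_mul Complex.I).mul_const z).neg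
    simp only [mul_one] at this
    exact this
  have h3 := h2.cexp
  have h4 := hg.mul h3
  refine h4.congr_deriv ?_
  simp only [Faux]
  ring

lemma faux_hasDerivAt_z (g : ℝ → ℂ) (t : ℝ) (z : ℂ) :
    HasDerivAt (fun w => Faux g w t) ((-(Complex.I * t)) * Faux g z t) z := by
  have h2 : HasDerivAt (fun w : ℂ => -(Complex.I * (t : ℂ) * w)) (-(Complex.I * t)) z := by
    have := ((hasDerivAt_id z).const_mul (Complex.I * (t:ℂ))).neg
    simp only [mul_one] at this
    exact this
  have h3 := h2.cexp
  have h4 := h3.const_mul (g t)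
  refine h4.congr_deriv ?_
  simp only [Faux]
  ring

theorem stmt18 (B : ℝ) (hB : 0 < B) (g : ℝ → ℂ)
    (hg2 : MemLp g 2 (volume : Measure ℝ))
    (hsmooth : ContDiff ℝ (⊤ : ℕ∞) g)
    (hbd : ∀ b : ℝ, b < B → ∀ k : ℕ, ∃ M : ℝ, ∀ y t : ℝ, |y| < b →
      Real.exp (y * t) * ‖iteratedDeriv k g t‖ ≤ M) :
    ∃ h : ℂ → ℂ,
      DifferentiableOn ℂ h {z : ℂ | |z.im| < B} ∧
      (∀ x : ℝ, h x = ∫ t : ℝ, g t * Complex.exp (-(Complex.I * t * x))) ∧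
      (∀ b : ℝ, b < B → ∀ k : ℕ, ∃ M : ℝ, ∀ z : ℂ, |z.im| < b →
        |z.re| ^ k * ‖h z‖ ≤ M) := by
  have decay : ∀ (k : ℕ) (b : ℝ), 0 < b → b < B → ∃ M : ℝ, 0 ≤ M ∧
      ∀ t : ℝ, ‖iteratedDeriv k g t‖ ≤ M * Real.exp (-(b * |t|)) := by
    intro k b hb0 hbB
    obtain ⟨M, hM⟩ := hbd ((b + B) / 2) (by linarith) k
    refine ⟨max M 0, le_max_right _ _, fun t => ?_⟩
    have hy : ∃ y : ℝ, |y| < (b + B) / 2 ∧ y * t = b * |t| := by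
      rcases le_or_gt 0 t with h | h
      · exact ⟨b, by rw [abs_of_pos hb0]; linarith, by rw [_root_.abs_of_nonneg h]⟩
      · exact ⟨-b, by rw [abs_neg, abs_of_pos hb0]; linarith,
          by rw [_root_.abs_of_neg h]; ring⟩
    obtain ⟨y, hy1, hy2⟩ := hy
    have hle := hM y t hy1
    rw [hy2] at hle
    have hep : (0:ℝ) < Real.exp (b * |t|) := Real.exp_pos _
    rw [Real.exp_neg, ← div_eq_mul_inv, le_div_iff₀ hep, mul_comm]
    exact le_trans hle (le_max_left _ _)
  have hcont : ∀ k : ℕ, Continuous (iteratedDeriv k g) :=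
    fun k => hsmooth.continuous_iteratedDeriv k (by exact_mod_cast le_top)
  have hdiffk : ∀ k : ℕ, Differentiable ℝ (iteratedDeriv k g) :=
    fun k => hsmooth.differentiable_iteratedDeriv k (by exact_mod_cast ENat.coe_lt_top k)
  refine ⟨fun z => ∫ t : ℝ, Faux g z t, ?_, ?_, ?_⟩
  · -- differentiability
    intro z₀ hz₀
    simp only [Set.mem_setOf_eq] at hz₀
    set b₀ : ℝ := (|z₀.im| + B) / 2 with hb₀def
    set ε : ℝ := (B - |z₀.im|) / 2 with hεdef
    have habs : 0 ≤ |z₀.im| := abs_nonneg _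
    have hε : 0 < ε := by rw [hεdef]; linarith
    set b : ℝ := (b₀ + B) / 2 with hbdef
    have hb₀b : b₀ < b := by rw [hbdef, hb₀def]; linarith
    have hbB : b < B := by rw [hbdef, hb₀def]; linarith
    have hb0 : 0 < b := by rw [hbdef, hb₀def]; linarith
    obtain ⟨M, hM0, hM⟩ := decay 0 b hb0 hbB
    rw [iteratedDeriv_zero] at hM
    set c : ℝ := b - b₀ with hcdef
    have hc : 0 < c := by rw [hcdef]; linarith
    have hc2 : 0 < c / 2 := by linarith
    have key := hasDerivAt_integral_of_dominated_loc_of_deriv_le (μ := volume)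
      (F := fun z t => Faux g z t) (F' := fun z t => (-(Complex.I * t)) * Faux g z t)
      (x₀ := z₀) (bound := fun t => (M * (2 / c)) * Real.exp (-(c / 2 * |t|))) (Metric.ball_mem_nhds z₀ hε)
      (Eventually.of_forall fun z => (faux_meas hsmooth.continuous z).aestronglyMeasurable)
      (faux_integrable hsmooth.continuous (le_refl |z₀.im|)
        (by rw [hbdef, hb₀def]; linarith) hM)
      (((continuous_const.mul Complex.continuous_ofReal : Continuous fun t : ℝ => Complex.I * (t:ℂ)).neg.mul
        (faux_meas hsmooth.continuous z₀)).aestronglyMeasurable)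
      (ae_of_all _ fun t z hzball => ?_)
      (((aux_int_exp hc2).const_mul _))
      (ae_of_all _ fun t z _ => faux_hasDerivAt_z g t z)
    · exact key.2.differentiableAt.differentiableWithinAt
    · -- the bound
      have him : |z.im| ≤ b₀ := by
        have h1 : |z.im - z₀.im| ≤ ‖z - z₀‖ := by
          simpa using Complex.abs_im_le_norm (z - z₀)
        have h2 : ‖z - z₀‖ < ε := by
          rw [Metric.mem_ball, Complex.dist_eq] at hzball
          exact hzball
        have h3 : |z.im| - |z₀.im| ≤ |z.im - z₀.im| := abs_sub_abs_le_abs_sub _ _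
        rw [hb₀def]
        linarith
      have hnorm : ‖(-(Complex.I * (t:ℂ))) * Faux g z t‖ = |t| * ‖Faux g z t‖ := by
        rw [norm_mul]
        congr 1
        simp
      rw [hnorm]
      calc |t| * ‖Faux g z t‖ ≤ |t| * (M * Real.exp (-(c * |t|))) := by
            refine mul_le_mul_of_nonneg_left ?_ (abs_nonneg t)
            simpa [hcdef] using faux_pointwise t him hM
        _ = M * (|t| * Real.exp (-(c * |t|))) := by ring
        _ ≤ M * ((2 / c) * Real.exp (-(c / 2 * |t|))) :=
            mul_le_mul_of_nonneg_left (aux_t_le hc t) hM0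
        _ = (M * (2 / c)) * Real.exp (-(c / 2 * |t|)) := by ring
  · -- real values
    intro x
    rfl
  · -- decay bounds, via the key identity
    have key : ∀ (z : ℂ), |z.im| < B → ∀ k : ℕ,
        (Complex.I * z) ^ k * (∫ t : ℝ, Faux g z t) =
          ∫ t, Faux (iteratedDeriv k g) z t := by
      intro z hz k
      induction k with
      | zero => simp [iteratedDeriv_zero]
      | succ k ih =>
        have habs : 0 ≤ |z.im| := abs_nonneg _
        set b : ℝ := (|z.im| + B) / 2 with hbdef
        have hb1 : |z.im| < b := by rw [hbdef]; linarith
        have hb0 : 0 < b := by rw [hbdef]; linarith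
        have hbB : b < B := by rw [hbdef]; linarith
        obtain ⟨M, hM0, hM⟩ := decay k b hb0 hbB
        obtain ⟨M', hM'0, hM'⟩ := decay (k+1) b hb0 hbB
        have i1 : Integrable (Faux (iteratedDeriv k g) z) :=
          faux_integrable (hcont k) (le_refl |z.im|) hb1 hM
        have i2 : Integrable (Faux (iteratedDeriv (k+1) g) z) :=
          faux_integrable (hcont (k+1)) (le_refl |z.im|) hb1 hM'
        have hd : ∀ t, HasDerivAt (fun s => Faux (iteratedDeriv k g) z s)
            (Faux (iteratedDeriv (k+1) g) z t
              + (-(Complex.I * z)) * Faux (iteratedDeriv k g) z t) t := by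
          intro t
          have hgd : HasDerivAt (iteratedDeriv k g) (iteratedDeriv (k+1) g t) t := by
            rw [iteratedDeriv_succ]
            exact ((hdiffk k) t).hasDerivAt
          exact faux_hasDerivAt_t z t hgd
        have hdint : Integrable (fun t => Faux (iteratedDeriv (k+1) g) z t
            + (-(Complex.I * z)) * Faux (iteratedDeriv k g) z t) :=
          i2.add (i1.const_mul _)
        have hcb : (0:ℝ) < b - |z.im| := by linarith
        have htend := tendsto_of_exp_bound hcb
          (fun t => faux_pointwise t (le_refl |z.im|) hM)
        have hzero := integral_deriv_eq_zero' _ _ hd hdint htend.1 htend.2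
        rw [integral_add i2 (i1.const_mul _), integral_const_mul] at hzero
        have hstep : (∫ t, Faux (iteratedDeriv (k+1) g) z t) =
            (Complex.I * z) * ∫ t, Faux (iteratedDeriv k g) z t := by
          linear_combination hzero
        rw [hstep, ← ih, pow_succ]
        ring
    intro b hbB k
    rcases le_or_gt b 0 with hb0 | hb0
    · exact ⟨0, fun z hz => absurd hz (not_lt.mpr (le_trans hb0 (abs_nonneg _)))⟩
    set b' : ℝ := (b + B) / 2 with hb'def
    have hbb' : b < b' := by rw [hb'def]; linarith
    have hb'B : b' < B := by rw [hb'def]; linarith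
    obtain ⟨M, hM0, hM⟩ := decay k b' (by linarith) hb'B
    refine ⟨M * ∫ t : ℝ, Real.exp (-((b' - b) * |t|)), fun z hz => ?_⟩
    have hzB : |z.im| < B := lt_trans hz hbB
    have h1 := key z hzB k
    have h2 : ‖(Complex.I * z) ^ k * ∫ t : ℝ, Faux g z t‖ ≤
        M * ∫ t : ℝ, Real.exp (-((b' - b) * |t|)) := by
      rw [h1]
      exact faux_integral_bound hz.le hbb' hM
    calc |z.re| ^ k * ‖∫ t : ℝ, Faux g z t‖
        ≤ ‖z‖ ^ k * ‖∫ t : ℝ, Faux g z t‖ :=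
          mul_le_mul_of_nonneg_right
            (pow_le_pow_left₀ (abs_nonneg _) (Complex.abs_re_le_norm z) k)
            (norm_nonneg _)
      _ = ‖(Complex.I * z) ^ k * ∫ t : ℝ, Faux g z t‖ := by
          rw [norm_mul, norm_pow, norm_mul, Complex.norm_I, one_mul]
      _ ≤ _ := h2
end
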